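/- Lamport's bakery algorithm for two processes (Example 3) satisfies non-starvation for process 2 under fairness: for every fair event stream es and every position i, if the second component of the trace σ of es under step3 from initial state (T,T,0,0) at position i is W, then there exists j ≥ i such that the second component of σ j is U. -/

import Mathlib

/-!
Once both processes have left `T` their tickets differ, since each new ticket is the other's
plus one. So when process 2 waits, either it holds the priority (process 1 thinks, or waits with
the larger ticket), or process 1 is using, or process 1 waits with the smaller ticket. Fairness
moves each case to the previous one: `take1` makes process 1 use, `release1` gives process 2 the
priority, and `take2` then lets it in; no other event can destroy the priority.
-/

inductive ProcState : Type where
  | T | W | U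
deriving DecidableEq

inductive Event : Type where
  | request1 | request2 | take1 | take2 | release1 | release2
deriving DecidableEq

/-- The trace of an event stream under a transition function from an initial state. -/
def trace {S : Type} (step : Event → S → S) (s0 : S) (es : ℕ → Event) : ℕ → S
  | 0 => s0
  | n + 1 => step (es n) (trace step s0 es n)

/-- An event stream is fair if every event occurs infinitely often. -/
def Fair (es : ℕ → Event) : Prop := ∀ (e : Event) (n : ℕ), ∃ m, n ≤ m ∧ es m = e

/-- Transition function of Example 3 (Lamport's bakery algorithm for two processes).
The state is `(s1, s2, t1, t2)` where `t1`, `t2` are the ticket numbers. -/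
def step3 : Event → ProcState × ProcState × ℕ × ℕ → ProcState × ProcState × ℕ × ℕ
  | .request1, (s1, s2, t1, t2) =>
      if s1 = ProcState.T then (.W, s2, t2 + 1, t2) else (s1, s2, t1, t2)
  | .request2, (s1, s2, t1, t2) =>
      if s2 = ProcState.T then (s1, .W, t1, t1 + 1) else (s1, s2, t1, t2)
  | .take1, (s1, s2, t1, t2) =>
      if s1 = ProcState.W ∧ (s2 = ProcState.T ∨ t1 < t2) then (.U, s2, t1, t2)
      else (s1, s2, t1, t2)
  | .take2, (s1, s2, t1, t2) =>
      if s2 = ProcState.W ∧ (s1 = ProcState.T ∨ t2 < t1) then (s1, .U, t1, t2)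
      else (s1, s2, t1, t2)
  | .release1, (s1, s2, t1, t2) =>
      if s1 = ProcState.U then (.T, s2, 0, t2) else (s1, s2, t1, t2)
  | .release2, (s1, s2, t1, t2) =>
      if s2 = ProcState.U then (s1, .T, t1, 0) else (s1, s2, t1, t2)


section Trace

variable {S : Type} {step : Event → S → S} {s0 : S} {es : ℕ → Event}

theorem trace_of_invariant {I : S → Prop} (h0 : I s0) (hstep : ∀ e s, I s → I (step e s)) :
    ∀ n, I (trace step s0 es n)
  | 0 => h0
  | n + 1 => hstep _ _ (trace_of_invariant h0 hstep n)

end Trace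

def LeadsTo {S : Type} (σ : ℕ → S) (P Q : S → Prop) : Prop :=
  ∀ n, P (σ n) → ∃ m, n ≤ m ∧ Q (σ m)

namespace LeadsTo

variable {S : Type} {σ : ℕ → S} {P P' Q R : S → Prop}

theorem of_imp (h : ∀ s, P s → Q s) : LeadsTo σ P Q :=
  fun n hn => ⟨n, le_rfl, h _ hn⟩

theorem trans (hPQ : LeadsTo σ P Q) (hQR : LeadsTo σ Q R) : LeadsTo σ P R := fun n hn => by
  obtain ⟨m, hnm, hm⟩ := hPQ n hn
  obtain ⟨k, hmk, hk⟩ := hQR m hm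
  exact ⟨k, hnm.trans hmk, hk⟩

theorem or (hP : LeadsTo σ P Q) (hP' : LeadsTo σ P' Q) : LeadsTo σ (fun s => P s ∨ P' s) Q :=
  fun n hn => hn.elim (hP n) (hP' n)

end LeadsTo

/-- The "helpful event" rule for fair streams. -/
theorem Fair.leadsTo_of_helpful {S : Type} {step : Event → S → S} {s0 : S} {es : ℕ → Event}
    (hf : Fair es) (e : Event) {P Q : S → Prop}
    (hstep : ∀ e' s, e' ≠ e → P s → P (step e' s) ∨ Q (step e' s))
    (hhelp : ∀ s, P s → Q (step e s)) :
    LeadsTo (trace step s0 es) P Q := by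
  intro n hn
  set σ := trace step s0 es
  have hsucc : ∀ k, σ (k + 1) = step (es k) (σ k) := fun _ => rfl
  have until_Q : ∀ k, n ≤ k → (∃ j, n ≤ j ∧ Q (σ j)) ∨ P (σ k) := by
    intro k hk
    induction k, hk using Nat.le_induction with
    | base => exact .inr hn
    | succ k hk ih =>
      refine ih.elim .inl fun hPk => ?_
      by_cases he : es k = e
      · exact .inl ⟨k + 1, by omega, by rw [hsucc, he]; exact hhelp _ hPk⟩
      · rw [hsucc]
        exact (hstep _ _ he hPk).symm.imp_left fun hQ => ⟨k + 1, by omega, hQ⟩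
  obtain ⟨m, hnm, hm⟩ := hf e n
  refine (until_Q m hnm).elim id fun hPm => ⟨m + 1, by omega, ?_⟩
  rw [hsucc, hm]
  exact hhelp _ hPm

namespace Bakery

open ProcState

abbrev State := ProcState × ProcState × ℕ × ℕ

def TicketsNe : State → Prop
  | (s1, s2, t1, t2) => s1 ≠ T → s2 ≠ T → t1 ≠ t2

/-- Process 2 waits and cannot be overtaken by process 1. -/
def Ahead2 : State → Prop
  | (s1, s2, t1, t2) => s2 = W ∧ (s1 = T ∨ s1 = W ∧ t2 < t1)

def Using1Waiting2 : State → Prop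
  | (s1, s2, _, _) => s1 = U ∧ s2 = W

def Ahead1 : State → Prop
  | (s1, s2, t1, t2) => s1 = W ∧ s2 = W ∧ t1 < t2

def Using2 (s : State) : Prop := s.2.1 = U

theorem ticketsNe_step3 (e : Event) (s : State) (h : TicketsNe s) : TicketsNe (step3 e s) := by
  obtain ⟨s1, s2, t1, t2⟩ := s
  cases e <;> simp only [step3] <;> split_ifs <;> simp_all [TicketsNe]

theorem ahead2_step3 (e : Event) (s : State) (he : e ≠ .take2) (h : Ahead2 s) :
    Ahead2 (step3 e s) := by
  obtain ⟨s1, s2, t1, t2⟩ := s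
  cases e <;> simp only [step3] <;> split_ifs <;> simp_all [Ahead2]
  omega

theorem using2_step3_take2 (s : State) (h : Ahead2 s) : Using2 (step3 .take2 s) := by
  obtain ⟨s1, s2, t1, t2⟩ := s
  obtain ⟨rfl, h1⟩ := h
  simp [step3, Using2, h1.imp_right And.right]

theorem using1Waiting2_step3 (e : Event) (s : State) (he : e ≠ .release1)
    (h : Using1Waiting2 s) : Using1Waiting2 (step3 e s) ∨ Using2 (step3 e s) := by
  obtain ⟨s1, s2, t1, t2⟩ := s
  cases e <;> simp only [step3] <;> split_ifs <;> simp_all [Using1Waiting2, Using2]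

theorem ahead2_step3_release1 (s : State) (h : Using1Waiting2 s) :
    Ahead2 (step3 .release1 s) := by
  obtain ⟨s1, s2, t1, t2⟩ := s
  obtain ⟨rfl, rfl⟩ := h
  simp [step3, Ahead2]

theorem ahead1_step3 (e : Event) (s : State) (he : e ≠ .take1) (h : Ahead1 s) :
    Ahead1 (step3 e s) := by
  obtain ⟨s1, s2, t1, t2⟩ := s
  cases e <;> simp only [step3] <;> split_ifs <;> simp_all [Ahead1]
  omega

theorem using1Waiting2_step3_take1 (s : State) (h : Ahead1 s) :
    Using1Waiting2 (step3 .take1 s) := by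
  obtain ⟨s1, s2, t1, t2⟩ := s
  obtain ⟨rfl, rfl, h⟩ := h
  simp [step3, Using1Waiting2, h]

theorem waiting2_cases (s : State) (hW : s.2.1 = W) (hne : TicketsNe s) :
    Ahead2 s ∨ Using1Waiting2 s ∨ Ahead1 s := by
  obtain ⟨s1, s2, t1, t2⟩ := s
  cases s1 <;> simp_all [TicketsNe, Ahead2, Using1Waiting2, Ahead1]
  omega

section Fair

variable {es : ℕ → Event} (hf : Fair es) (s0 : State)
include hf

theorem leadsTo_ahead2_using2 : LeadsTo (trace step3 s0 es) Ahead2 Using2 :=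
  hf.leadsTo_of_helpful .take2 (fun e s he h => .inl (ahead2_step3 e s he h)) using2_step3_take2

theorem leadsTo_using1Waiting2_using2 : LeadsTo (trace step3 s0 es) Using1Waiting2 Using2 :=
  (hf.leadsTo_of_helpful (Q := fun s => Ahead2 s ∨ Using2 s) .release1
      (fun e s he h => (using1Waiting2_step3 e s he h).imp_right .inr)
      fun s h => .inl (ahead2_step3_release1 s h)).trans
    ((leadsTo_ahead2_using2 hf s0).or (.of_imp fun _ => id))

theorem leadsTo_ahead1_using2 : LeadsTo (trace step3 s0 es) Ahead1 Using2 :=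
  (hf.leadsTo_of_helpful .take1 (fun e s he h => .inl (ahead1_step3 e s he h))
      using1Waiting2_step3_take1).trans
    (leadsTo_using1Waiting2_using2 hf s0)

end Fair

end Bakery

/-- Lamport's bakery algorithm (Example 3) satisfies non-starvation for process 2
under fairness. -/
theorem bakery_non_starvation_process2 :
    ∀ es : ℕ → Event, Fair es → ∀ i : ℕ,
      (trace step3 (ProcState.T, ProcState.T, 0, 0) es i).2.1 = ProcState.W →
      ∃ j, i ≤ j ∧
        (trace step3 (ProcState.T, ProcState.T, 0, 0) es j).2.1 = ProcState.U := by
  intro es hf i hW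
  have hne : Bakery.TicketsNe (trace step3 (ProcState.T, ProcState.T, 0, 0) es i) :=
    trace_of_invariant (fun h _ => absurd rfl h) Bakery.ticketsNe_step3 i
  have leadsTo_using2 :=
    (Bakery.leadsTo_ahead2_using2 hf (ProcState.T, ProcState.T, 0, 0)).or <|
      (Bakery.leadsTo_using1Waiting2_using2 hf _).or (Bakery.leadsTo_ahead1_using2 hf _)
  exact leadsTo_using2 i (Bakery.waiting2_cases _ hW hne)
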